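/- arXiv:2502.06153 — 5 statements merged into one kernel-verified Lean document; each statement's English description precedes it below -/
import Mathlib

section
/- Let A be a real third-order tensor of size n1 × n2 × n3 and let r1 ≤ n1, r2 ≤ n2, r3 ≤ n3 be given. Then there exist a core tensor G ∈ ℝ^{r1×r2×r3} and matrices U^{(1)} ∈ ℝ^{n1×r1}, U^{(2)} ∈ ℝ^{n2×r2}, U^{(3)} ∈ ℝ^{n3×r3} such that ‖A − G ×₁ U^{(1)} ×₂ U^{(2)} ×₃ U^{(3)}‖_F² ≤ Σ_{r=r1+1}^{n1} σ_r(A^{(1)})² + Σ_{r=r2+1}^{n2} σ_r(A^{(2)})² + Σ_{r=r3+1}^{n3} σ_r(A^{(3)})². -/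
/-!
Higher-order SVD. Let `Wᵢ` have as columns `rᵢ` leading eigenvectors of `A⁽ⁱ⁾ A⁽ⁱ⁾ᵀ`, so that
`Pᵢ = Wᵢ Wᵢᵀ` is an orthogonal projection, and take the core `G = A ×₁ W₁ᵀ ×₂ W₂ᵀ ×₃ W₃ᵀ`; the Tucker
product is then `A ×₁ P₁ ×₂ P₂ ×₃ P₃`. For an orthogonal projection `p`, `x - p y` splits orthogonally
as `(x - p x) + p (x - y)`, so `‖x - p y‖² ≤ ‖x - p x‖² + ‖x - y‖²`; applied twice, this bounds the
error by the three single-mode errors `‖A - A ×ᵢ Pᵢ‖² = ‖(1 - Pᵢ) A⁽ⁱ⁾‖²`. Each of these equals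
`tr (A⁽ⁱ⁾ A⁽ⁱ⁾ᵀ) - tr (Wᵢᵀ A⁽ⁱ⁾ A⁽ⁱ⁾ᵀ Wᵢ)`, the sum of the discarded eigenvalues of `A⁽ⁱ⁾ A⁽ⁱ⁾ᵀ`, that is,
of the squared trailing singular values of `A⁽ⁱ⁾`.
-/

noncomputable section
open Finset Matrix

def frob3 {n1 n2 n3 : ℕ} (A : Fin n1 → Fin n2 → Fin n3 → ℝ) : ℝ :=
  Real.sqrt (∑ p, ∑ q, ∑ k, A p q k ^ 2)

def unfold1 {n1 n2 n3 : ℕ} (A : Fin n1 → Fin n2 → Fin n3 → ℝ) :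
    Matrix (Fin n1) (Fin n2 × Fin n3) ℝ :=
  Matrix.of fun p qk => A p qk.1 qk.2

def unfold2 {n1 n2 n3 : ℕ} (A : Fin n1 → Fin n2 → Fin n3 → ℝ) :
    Matrix (Fin n2) (Fin n1 × Fin n3) ℝ :=
  Matrix.of fun q pk => A pk.1 q pk.2

def unfold3 {n1 n2 n3 : ℕ} (A : Fin n1 → Fin n2 → Fin n3 → ℝ) :
    Matrix (Fin n3) (Fin n1 × Fin n2) ℝ :=
  Matrix.of fun k pq => A pq.1 pq.2 k

/-- `sval E r` is the `(r+1)`-th largest singular value of `E`, i.e. the square root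
of the `(r+1)`-th largest eigenvalue of `E * Eᵀ` (here `Eᴴ = Eᵀ` over `ℝ`). -/
def sval {n : ℕ} {ι : Type*} [Fintype ι] (E : Matrix (Fin n) ι ℝ) (r : Fin n) : ℝ :=
  Real.sqrt (((Matrix.isHermitian_mul_conjTranspose_self E).eigenvalues ∘
    Tuple.sort (Matrix.isHermitian_mul_conjTranspose_self E).eigenvalues) r.rev)

/-- Tucker product `G ×₁ U1 ×₂ U2 ×₃ U3`. -/
def tucker {n1 n2 n3 r1 r2 r3 : ℕ} (G : Fin r1 → Fin r2 → Fin r3 → ℝ)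
    (U1 : Matrix (Fin n1) (Fin r1) ℝ) (U2 : Matrix (Fin n2) (Fin r2) ℝ)
    (U3 : Matrix (Fin n3) (Fin r3) ℝ) : Fin n1 → Fin n2 → Fin n3 → ℝ :=
  fun p q k => ∑ a, ∑ b, ∑ c, G a b c * U1 p a * U2 q b * U3 k c

open scoped Kronecker

section StarProjection

variable {𝕜 E : Type*} [RCLike 𝕜] [NormedAddCommGroup E] [InnerProductSpace 𝕜 E] [CompleteSpace E]

theorem IsStarProjection.norm_sub_apply_sq_le {p : E →L[𝕜] E} (hp : IsStarProjection p)
    (x y : E) : ‖x - p y‖ ^ 2 ≤ ‖x - p x‖ ^ 2 + ‖x - y‖ ^ 2 := by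
  have hsplit : x - p y = (x - p x) + p (x - y) := by rw [map_sub]; abel
  have horth : inner 𝕜 (x - p x) (p (x - y)) = 0 := by
    rw [← ContinuousLinearMap.adjoint_inner_left, ← ContinuousLinearMap.star_eq_adjoint,
      hp.isSelfAdjoint.star_eq, map_sub, ← mul_apply_eq_comp, hp.isIdempotentElem.eq, sub_self,
      inner_zero_left]
  have hcontr : ‖p (x - y)‖ ≤ ‖x - y‖ :=
    (p.le_opNorm _).trans (mul_le_of_le_one_left (norm_nonneg _) hp.norm_le)
  rw [hsplit, norm_add_sq (𝕜 := 𝕜), horth, map_zero, mul_zero, add_zero]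
  gcongr

end StarProjection

theorem IsStarProjection.kronecker {R l m : Type*} [CommRing R] [StarRing R]
    [Fintype l] [Fintype m] {P : Matrix l l R} {Q : Matrix m m R}
    (hP : IsStarProjection P) (hQ : IsStarProjection Q) : IsStarProjection (P ⊗ₖ Q) where
  isIdempotentElem := by
    rw [IsIdempotentElem, ← mul_kronecker_mul, hP.isIdempotentElem.eq, hQ.isIdempotentElem.eq]
  isSelfAdjoint := by
    rw [IsSelfAdjoint, star_eq_conjTranspose, conjTranspose_kronecker,
      ← star_eq_conjTranspose, ← star_eq_conjTranspose, hP.isSelfAdjoint.star_eq,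
      hQ.isSelfAdjoint.star_eq]

namespace Matrix

theorem isStarProjection_mul_transpose_self {m n : Type*} [Fintype m] [Fintype n]
    [DecidableEq n] {W : Matrix m n ℝ} (hW : Wᵀ * W = 1) : IsStarProjection (W * Wᵀ) where
  isIdempotentElem := by
    rw [IsIdempotentElem, Matrix.mul_assoc, ← Matrix.mul_assoc Wᵀ, hW, Matrix.one_mul]
  isSelfAdjoint := by
    rw [IsSelfAdjoint, star_eq_conjTranspose, conjTranspose_eq_transpose_of_trivial,
      transpose_mul, transpose_transpose]

theorem sum_sq_sub_mul_transpose_mul {m ι κ : Type*} [Fintype m] [DecidableEq m]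
    [Fintype ι] [Fintype κ] [DecidableEq κ] (E : Matrix m ι ℝ) {W : Matrix m κ ℝ}
    (hW : Wᵀ * W = 1) :
    ∑ i, ∑ j, (E - W * Wᵀ * E) i j ^ 2 = trace (E * Eᵀ) - trace (Wᵀ * (E * Eᵀ) * W) := by
  have hQ := (isStarProjection_mul_transpose_self hW).one_sub
  have hQt : (1 - W * Wᵀ)ᵀ = 1 - W * Wᵀ := by
    rw [← conjTranspose_eq_transpose_of_trivial, ← star_eq_conjTranspose, hQ.isSelfAdjoint.star_eq]
  have hsum (X : Matrix m ι ℝ) : ∑ i, ∑ j, X i j ^ 2 = trace (X * Xᵀ) := by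
    simp only [trace, diag, mul_apply, transpose_apply, sq]
  calc ∑ i, ∑ j, (E - W * Wᵀ * E) i j ^ 2
      = trace ((1 - W * Wᵀ) * E * ((1 - W * Wᵀ) * E)ᵀ) := by
        rw [← hsum, Matrix.sub_mul, Matrix.one_mul]
    _ = trace ((1 - W * Wᵀ) * (1 - W * Wᵀ) * (E * Eᵀ)) := by
        rw [transpose_mul, hQt, ← Matrix.mul_assoc, trace_mul_comm]
        simp only [Matrix.mul_assoc]
    _ = trace (E * Eᵀ) - trace (Wᵀ * (E * Eᵀ) * W) := by
        rw [hQ.isIdempotentElem.eq, Matrix.sub_mul, Matrix.one_mul, trace_sub, Matrix.mul_assoc,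
          trace_mul_comm W, Matrix.mul_assoc]

theorem IsHermitian.exists_transpose_mul_self_eq_one_trace_eq {n κ : Type*} [Fintype n]
    [DecidableEq n] [Fintype κ] [DecidableEq κ] {M : Matrix n n ℝ} (hM : M.IsHermitian)
    (f : κ ↪ n) :
    ∃ W : Matrix n κ ℝ, Wᵀ * W = 1 ∧ trace (Wᵀ * M * W) = ∑ a, hM.eigenvalues (f a) := by
  set V : Matrix n n ℝ := (hM.eigenvectorUnitary : Matrix n n ℝ)
  have hVt : Vᵀ = star V := by rw [star_eq_conjTranspose, conjTranspose_eq_transpose_of_trivial]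
  have hVV : Vᵀ * V = 1 := by rw [hVt]; exact Unitary.coe_star_mul_self _
  have hdiag : Vᵀ * M * V = diagonal hM.eigenvalues := by
    have h := hM.conjStarAlgAut_star_eigenvectorUnitary
    rwa [Unitary.conjStarAlgAut_star_apply, RCLike.ofReal_real_eq_id, Function.id_comp] at h
  have hbij : Function.Bijective (id : n → n) := Function.bijective_id
  refine ⟨V.submatrix id f, ?_, ?_⟩
  · rw [transpose_submatrix, ← submatrix_mul _ _ _ _ _ hbij, hVV, submatrix_one_embedding]
  · have hsub : (V.submatrix id f)ᵀ * M * V.submatrix id f = (Vᵀ * M * V).submatrix f f := by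
      rw [submatrix_mul _ _ _ _ _ hbij, submatrix_mul _ _ _ _ _ hbij, submatrix_id_id,
        transpose_submatrix]
    rw [hsub, hdiag, submatrix_diagonal_embedding, trace_diagonal]
    rfl

end Matrix

theorem Fin.sum_filter_le_add_sum_castLE {M : Type*} [AddCommMonoid M] {r n : ℕ} (h : r ≤ n)
    (g : Fin n → M) :
    ∑ i ∈ univ.filter (fun i : Fin n => r ≤ (i : ℕ)), g i + ∑ a : Fin r, g (a.castLE h) =
      ∑ i, g i := by
  have himage : univ.filter (fun i : Fin n => ¬ r ≤ (i : ℕ)) = univ.map (Fin.castLEEmb h) := by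
    ext i
    simp only [mem_filter, mem_univ, true_and, not_le, mem_map, Fin.coe_castLEEmb]
    exact ⟨fun hi => ⟨⟨i, hi⟩, rfl⟩, by rintro ⟨a, rfl⟩; exact a.isLt⟩
  rw [← sum_filter_add_sum_filter_not univ (fun i : Fin n => r ≤ (i : ℕ)), himage, sum_map]
  rfl

section SingularValues

variable {n : ℕ} {ι : Type*} [Fintype ι]

theorem sval_sq (E : Matrix (Fin n) ι ℝ) (i : Fin n) :
    sval E i ^ 2 = (isHermitian_mul_conjTranspose_self E).eigenvalues
      ((Fin.revPerm.trans (Tuple.sort (isHermitian_mul_conjTranspose_self E).eigenvalues)) i) :=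
  Real.sq_sqrt (eigenvalues_self_mul_conjTranspose_nonneg E _)

theorem exists_transpose_mul_self_eq_one_sum_sq_sub_eq (E : Matrix (Fin n) ι ℝ) {r : ℕ}
    (h : r ≤ n) :
    ∃ W : Matrix (Fin n) (Fin r) ℝ, Wᵀ * W = 1 ∧
      ∑ i, ∑ j, (E - W * Wᵀ * E) i j ^ 2 =
        ∑ i ∈ univ.filter (fun i : Fin n => r ≤ (i : ℕ)), sval E i ^ 2 := by
  set hM := isHermitian_mul_conjTranspose_self E
  set π := Fin.revPerm.trans (Tuple.sort hM.eigenvalues)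
  obtain ⟨W, hW, htr⟩ :=
    hM.exists_transpose_mul_self_eq_one_trace_eq ((Fin.castLEEmb h).trans π.toEmbedding)
  refine ⟨W, hW, ?_⟩
  rw [sum_sq_sub_mul_transpose_mul E hW, ← conjTranspose_eq_transpose_of_trivial, htr,
    hM.trace_eq_sum_eigenvalues, ← Equiv.sum_comp π, ← Fin.sum_filter_le_add_sum_castLE h]
  simp only [Function.Embedding.trans_apply, Equiv.coe_toEmbedding, Fin.castLEEmb_apply,
    RCLike.ofReal_real_eq_id, id_eq, add_sub_cancel_right, sval_sq]
  rfl

end SingularValues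

section Tensor

variable {n1 n2 n3 : ℕ}

def vec3 (A : Fin n1 → Fin n2 → Fin n3 → ℝ) : Fin n1 × Fin n2 × Fin n3 → ℝ :=
  fun i => A i.1 i.2.1 i.2.2

theorem vec3_injective : Function.Injective (vec3 (n1 := n1) (n2 := n2) (n3 := n3)) :=
  fun _ _ h => funext₃ fun p q k => congrFun h (p, q, k)

theorem vec3_tucker {r1 r2 r3 : ℕ} (G : Fin r1 → Fin r2 → Fin r3 → ℝ)
    (U1 : Matrix (Fin n1) (Fin r1) ℝ) (U2 : Matrix (Fin n2) (Fin r2) ℝ)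
    (U3 : Matrix (Fin n3) (Fin r3) ℝ) :
    vec3 (tucker G U1 U2 U3) = (U1 ⊗ₖ (U2 ⊗ₖ U3)) *ᵥ vec3 G := by
  funext ⟨p, q, k⟩
  simp only [vec3, tucker, mulVec, dotProduct, Fintype.sum_prod_type, kronecker_apply]
  exact sum_congr rfl fun _ _ => sum_congr rfl fun _ _ => sum_congr rfl fun _ _ => by ring

theorem tucker_tucker {r1 r2 r3 s1 s2 s3 : ℕ} (A : Fin s1 → Fin s2 → Fin s3 → ℝ)
    (V1 : Matrix (Fin r1) (Fin s1) ℝ) (V2 : Matrix (Fin r2) (Fin s2) ℝ)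
    (V3 : Matrix (Fin r3) (Fin s3) ℝ) (U1 : Matrix (Fin n1) (Fin r1) ℝ)
    (U2 : Matrix (Fin n2) (Fin r2) ℝ) (U3 : Matrix (Fin n3) (Fin r3) ℝ) :
    tucker (tucker A V1 V2 V3) U1 U2 U3 = tucker A (U1 * V1) (U2 * V2) (U3 * V3) :=
  vec3_injective <| by simp only [vec3_tucker, mulVec_mulVec, ← mul_kronecker_mul]

theorem frob3_eq_norm (A : Fin n1 → Fin n2 → Fin n3 → ℝ) :
    frob3 A = ‖(WithLp.toLp 2 (vec3 A) : EuclideanSpace ℝ _)‖ := by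
  simp [frob3, EuclideanSpace.norm_eq, vec3, Fintype.sum_prod_type]

theorem frob3_sub_tucker_eq_norm (A : Fin n1 → Fin n2 → Fin n3 → ℝ)
    (U1 : Matrix (Fin n1) (Fin n1) ℝ) (U2 : Matrix (Fin n2) (Fin n2) ℝ)
    (U3 : Matrix (Fin n3) (Fin n3) ℝ) :
    frob3 (A - tucker A U1 U2 U3) =
      ‖WithLp.toLp 2 (vec3 A) -
        toEuclideanCLM (𝕜 := ℝ) (U1 ⊗ₖ (U2 ⊗ₖ U3)) (WithLp.toLp 2 (vec3 A))‖ := by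
  rw [frob3_eq_norm, toEuclideanCLM_toLp, ← vec3_tucker]
  rfl

theorem frob3_sub_tucker_sq_le_of_isStarProjection {P1 : Matrix (Fin n1) (Fin n1) ℝ}
    {P2 : Matrix (Fin n2) (Fin n2) ℝ} (hP1 : IsStarProjection P1) (hP2 : IsStarProjection P2)
    (P3 : Matrix (Fin n3) (Fin n3) ℝ) (A : Fin n1 → Fin n2 → Fin n3 → ℝ) :
    frob3 (A - tucker A P1 P2 P3) ^ 2 ≤
      frob3 (A - tucker A P1 1 1) ^ 2 + frob3 (A - tucker A 1 P2 1) ^ 2 +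
        frob3 (A - tucker A 1 1 P3) ^ 2 := by
  have hsplit : P1 ⊗ₖ (P2 ⊗ₖ P3) = P1 ⊗ₖ (1 ⊗ₖ 1) * (1 ⊗ₖ (P2 ⊗ₖ 1) * 1 ⊗ₖ (1 ⊗ₖ P3)) := by
    simp only [← mul_kronecker_mul, mul_one, one_mul]
  have hT {U1 : Matrix (Fin n1) (Fin n1) ℝ} {U2 : Matrix (Fin n2) (Fin n2) ℝ}
      {U3 : Matrix (Fin n3) (Fin n3) ℝ} (h1 : IsStarProjection U1) (h2 : IsStarProjection U2)
      (h3 : IsStarProjection U3) :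
      IsStarProjection (toEuclideanCLM (𝕜 := ℝ) (U1 ⊗ₖ (U2 ⊗ₖ U3))) :=
    (h1.kronecker (h2.kronecker h3)).map _
  have h1 := hT hP1 (.one _) (.one _)
  have h2 := hT (.one _) hP2 (.one _)
  simp only [frob3_sub_tucker_eq_norm, hsplit, map_mul, mul_apply_eq_comp]
  refine (h1.norm_sub_apply_sq_le _ _).trans ?_
  rw [add_assoc]
  gcongr
  exact h2.norm_sub_apply_sq_le _ _

theorem frob3_sq (A : Fin n1 → Fin n2 → Fin n3 → ℝ) :
    frob3 A ^ 2 = ∑ p, ∑ q, ∑ k, A p q k ^ 2 :=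
  Real.sq_sqrt (by positivity)

theorem frob3_sub_tucker_mode1_sq (A : Fin n1 → Fin n2 → Fin n3 → ℝ)
    (P : Matrix (Fin n1) (Fin n1) ℝ) :
    frob3 (A - tucker A P 1 1) ^ 2 = ∑ i, ∑ j, (unfold1 A - P * unfold1 A) i j ^ 2 := by
  have hunfold : unfold1 (tucker A P 1 1) = P * unfold1 A := by
    ext p ⟨q, k⟩
    simp [unfold1, tucker, mul_apply, one_apply, mul_comm]
  rw [← hunfold, frob3_sq]
  simp [unfold1, Fintype.sum_prod_type]

theorem frob3_sub_tucker_mode2_sq (A : Fin n1 → Fin n2 → Fin n3 → ℝ)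
    (P : Matrix (Fin n2) (Fin n2) ℝ) :
    frob3 (A - tucker A 1 P 1) ^ 2 = ∑ i, ∑ j, (unfold2 A - P * unfold2 A) i j ^ 2 := by
  have hunfold : unfold2 (tucker A 1 P 1) = P * unfold2 A := by
    ext q ⟨p, k⟩
    simp [unfold2, tucker, mul_apply, one_apply, mul_comm]
  rw [← hunfold, frob3_sq]
  simp only [unfold2, Matrix.sub_apply, Fintype.sum_prod_type, Pi.sub_apply]
  exact Finset.sum_comm

theorem frob3_sub_tucker_mode3_sq (A : Fin n1 → Fin n2 → Fin n3 → ℝ)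
    (P : Matrix (Fin n3) (Fin n3) ℝ) :
    frob3 (A - tucker A 1 1 P) ^ 2 = ∑ i, ∑ j, (unfold3 A - P * unfold3 A) i j ^ 2 := by
  have hunfold : unfold3 (tucker A 1 1 P) = P * unfold3 A := by
    ext k ⟨p, q⟩
    simp [unfold3, tucker, mul_apply, one_apply, mul_comm]
  rw [← hunfold, frob3_sq]
  simp only [unfold3, Matrix.sub_apply, Fintype.sum_prod_type, Pi.sub_apply]
  rw [eq_comm, Finset.sum_comm]
  exact sum_congr rfl fun _ _ => Finset.sum_comm

end Tensor

/-- Indices are 0-based: the range `r = rᵢ+1, …, nᵢ` of the paper is `rᵢ ≤ r` for `r : Fin nᵢ`. -/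
theorem tucker_approximation {n1 n2 n3 : ℕ} (r1 r2 r3 : ℕ)
    (h1 : r1 ≤ n1) (h2 : r2 ≤ n2) (h3 : r3 ≤ n3)
    (A : Fin n1 → Fin n2 → Fin n3 → ℝ) :
    ∃ (G : Fin r1 → Fin r2 → Fin r3 → ℝ)
      (U1 : Matrix (Fin n1) (Fin r1) ℝ) (U2 : Matrix (Fin n2) (Fin r2) ℝ)
      (U3 : Matrix (Fin n3) (Fin r3) ℝ),
      frob3 (fun p q k => A p q k - tucker G U1 U2 U3 p q k) ^ 2 ≤
        (∑ r ∈ Finset.univ.filter (fun r : Fin n1 => r1 ≤ (r : ℕ)),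
            sval (unfold1 A) r ^ 2) +
        (∑ r ∈ Finset.univ.filter (fun r : Fin n2 => r2 ≤ (r : ℕ)),
            sval (unfold2 A) r ^ 2) +
        (∑ r ∈ Finset.univ.filter (fun r : Fin n3 => r3 ≤ (r : ℕ)),
            sval (unfold3 A) r ^ 2) := by
  obtain ⟨W1, hW1, hE1⟩ := exists_transpose_mul_self_eq_one_sum_sq_sub_eq (unfold1 A) h1
  obtain ⟨W2, hW2, hE2⟩ := exists_transpose_mul_self_eq_one_sum_sq_sub_eq (unfold2 A) h2
  obtain ⟨W3, -, hE3⟩ := exists_transpose_mul_self_eq_one_sum_sq_sub_eq (unfold3 A) h3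
  refine ⟨tucker A W1ᵀ W2ᵀ W3ᵀ, W1, W2, W3, ?_⟩
  calc frob3 (A - tucker (tucker A W1ᵀ W2ᵀ W3ᵀ) W1 W2 W3) ^ 2
      = frob3 (A - tucker A (W1 * W1ᵀ) (W2 * W2ᵀ) (W3 * W3ᵀ)) ^ 2 := by rw [tucker_tucker]
    _ ≤ frob3 (A - tucker A (W1 * W1ᵀ) 1 1) ^ 2 + frob3 (A - tucker A 1 (W2 * W2ᵀ) 1) ^ 2 +
          frob3 (A - tucker A 1 1 (W3 * W3ᵀ)) ^ 2 :=
        frob3_sub_tucker_sq_le_of_isStarProjection (isStarProjection_mul_transpose_self hW1)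
          (isStarProjection_mul_transpose_self hW2) _ A
    _ = _ := by
        rw [frob3_sub_tucker_mode1_sq, frob3_sub_tucker_mode2_sq, frob3_sub_tucker_mode3_sq,
          hE1, hE2, hE3]
end
end

section
/- Suppose each basis function b_k : ℝ → ℝ (k = 1,…,n_d) satisfies |b_k(t)| ≤ B for all t ∈ ℝ, where B > 0. Then for every z ∈ ℝ^n and all parameter tensors A, A' ∈ ℝ^{n×m×n_d}, the KAN layer outputs satisfy ‖Φ(z;A) − Φ(z;A')‖₂ ≤ B √(n · n_d) · ‖A − A'‖_F. -/
noncomputable section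
open Finset

/-- Euclidean norm of a finitely-indexed real vector. -/
def enorm {ι : Type*} [Fintype ι] (x : ι → ℝ) : ℝ :=
  Real.sqrt (∑ i, x i ^ 2)

/-- A KAN layer: `Φ(z;A)_q = Σ_p Σ_k A_{p,q,k} b_k(z_p)`. -/
def kanLayer {n m nd : ℕ} (b : Fin nd → ℝ → ℝ) (A : Fin n → Fin m → Fin nd → ℝ)
    (z : Fin n → ℝ) : Fin m → ℝ :=
  fun q => ∑ p, ∑ k, A p q k * b k (z p)

/-! For fixed `z` the layer is linear in `A`, and each output coordinate is a dot product of a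
slice of `A` with the vector `(b_k(z_p))_{p,k}` of `n n_d` entries bounded by `B`.
Cauchy–Schwarz bounds its square by `n n_d B²` times the squared norm of the slice, and
summing over the outputs gives the Frobenius norm. -/

theorem sq_sum_mul_le_of_abs_le {ι : Type*} [Fintype ι] (c x : ι → ℝ) {B : ℝ}
    (hx : ∀ i, |x i| ≤ B) :
    (∑ i, c i * x i) ^ 2 ≤ Fintype.card ι * B ^ 2 * ∑ i, c i ^ 2 := by
  have hx2 : ∑ i, x i ^ 2 ≤ Fintype.card ι * B ^ 2 := by
    simpa using Finset.sum_le_card_nsmul univ (fun i => x i ^ 2) (B ^ 2) fun i _ =>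
      sq_le_sq' (abs_le.mp (hx i)).1 (abs_le.mp (hx i)).2
  calc (∑ i, c i * x i) ^ 2 ≤ (∑ i, c i ^ 2) * ∑ i, x i ^ 2 :=
        Finset.sum_mul_sq_le_sq_mul_sq univ c x
    _ ≤ (∑ i, c i ^ 2) * (Fintype.card ι * B ^ 2) := by gcongr
    _ = Fintype.card ι * B ^ 2 * ∑ i, c i ^ 2 := by ring

section KAN

variable {n m nd : ℕ} (b : Fin nd → ℝ → ℝ) (z : Fin n → ℝ)

theorem kanLayer_sub (A A' : Fin n → Fin m → Fin nd → ℝ) :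
    kanLayer b A z - kanLayer b A' z = kanLayer b (A - A') z := by
  ext q
  simp only [kanLayer, Pi.sub_apply, sub_mul, Finset.sum_sub_distrib]

theorem sq_kanLayer_le {B : ℝ} (hbound : ∀ k t, |b k t| ≤ B)
    (A : Fin n → Fin m → Fin nd → ℝ) (q : Fin m) :
    kanLayer b A z q ^ 2 ≤ n * nd * B ^ 2 * ∑ p, ∑ k, A p q k ^ 2 := by
  have h := sq_sum_mul_le_of_abs_le (fun pk : Fin n × Fin nd => A pk.1 q pk.2)
    (fun pk => b pk.2 (z pk.1)) fun pk => hbound pk.2 (z pk.1)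
  simpa only [kanLayer, Fintype.sum_prod_type, Fintype.card_prod, Fintype.card_fin,
    Nat.cast_mul] using h

theorem enorm_kanLayer_le {B : ℝ} (hB : 0 ≤ B) (hbound : ∀ k t, |b k t| ≤ B)
    (A : Fin n → Fin m → Fin nd → ℝ) :
    _root_.enorm (kanLayer b A z) ≤ B * Real.sqrt (n * nd) * frob3 A := by
  refine Real.sqrt_le_iff.mpr ⟨by unfold frob3; positivity, ?_⟩
  calc ∑ q, kanLayer b A z q ^ 2
      ≤ ∑ q, n * nd * B ^ 2 * ∑ p, ∑ k, A p q k ^ 2 :=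
        Finset.sum_le_sum fun q _ => sq_kanLayer_le b z hbound A q
    _ = (B * Real.sqrt (n * nd) * frob3 A) ^ 2 := by
        rw [← Finset.mul_sum, Finset.sum_comm, frob3, mul_pow, mul_pow,
          Real.sq_sqrt (by positivity), Real.sq_sqrt (by positivity)]
        ring

end KAN

/-- If every basis function is bounded by `B > 0`, then for fixed input `z` a KAN
layer is `B √(n n_d)`-Lipschitz in its parameter tensor (Frobenius norm). -/
theorem kanLayer_param_lipschitz {n m nd : ℕ} (b : Fin nd → ℝ → ℝ) (B : ℝ) (hB : 0 < B)
    (hbound : ∀ (k : Fin nd) (t : ℝ), |b k t| ≤ B)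
    (z : Fin n → ℝ) (A A' : Fin n → Fin m → Fin nd → ℝ) :
    _root_.enorm (fun q => kanLayer b A z q - kanLayer b A' z q) ≤
      B * Real.sqrt ((n : ℝ) * (nd : ℝ)) * frob3 (fun p q k => A p q k - A' p q k) := by
  have h := enorm_kanLayer_le b z hB.le hbound (A - A')
  rwa [← kanLayer_sub] at h
end
end

section
/- Suppose each basis function b_k : ℝ → ℝ (k = 1,…,n_d) is Lipschitz continuous with constant K > 0, and let A ∈ ℝ^{n×m×n_d} be a parameter tensor with ‖A‖_F ≤ M. Then for all z, z' ∈ ℝ^n, the KAN layer outputs satisfy ‖Φ(z;A) − Φ(z';A)‖₂ ≤ M K √n_d · ‖z − z'‖₂. -/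
noncomputable section
open Finset

/-! Writing `Φ(z;A)_q - Φ(z';A)_q = Σ_{p,k} A_{p,q,k} (b_k(z_p) - b_k(z'_p))`, Cauchy–Schwarz in the
pair `(p, k)` for each output `q` bounds `‖Φ(z;A) - Φ(z';A)‖₂²` by `‖A‖_F²` times
`Σ_{p,k} (b_k(z_p) - b_k(z'_p))²`, and the Lipschitz bound on each of the `n_d` basis functions
bounds the latter by `n_d K² ‖z - z'‖₂²`. -/

theorem sq_enorm {ι : Type*} [Fintype ι] (x : ι → ℝ) : _root_.enorm x ^ 2 = ∑ i, x i ^ 2 :=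
  Real.sq_sqrt (sum_nonneg fun _ _ => sq_nonneg _)

theorem enorm_le_of_sum_sq_le {ι : Type*} [Fintype ι] {x : ι → ℝ} {c : ℝ} (hc : 0 ≤ c)
    (h : ∑ i, x i ^ 2 ≤ c ^ 2) : _root_.enorm x ≤ c :=
  Real.sqrt_le_iff.mpr ⟨hc, h⟩

theorem sq_frob3 {n1 n2 n3 : ℕ} (A : Fin n1 → Fin n2 → Fin n3 → ℝ) :
    frob3 A ^ 2 = ∑ p, ∑ q, ∑ k, A p q k ^ 2 :=
  Real.sq_sqrt (sum_nonneg fun _ _ => sum_nonneg fun _ _ => sum_nonneg fun _ _ => sq_nonneg _)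

theorem sq_sum_sum_mul_le {ι κ : Type*} [Fintype ι] [Fintype κ] (a u : ι → κ → ℝ) :
    (∑ p, ∑ k, a p k * u p k) ^ 2 ≤ (∑ p, ∑ k, a p k ^ 2) * ∑ p, ∑ k, u p k ^ 2 := by
  simpa only [Fintype.sum_prod_type] using
    sum_mul_sq_le_sq_mul_sq univ (fun x : ι × κ => a x.1 x.2) (fun x => u x.1 x.2)

theorem sum_sq_contract_le {ι μ κ : Type*} [Fintype ι] [Fintype μ] [Fintype κ]
    (A : ι → μ → κ → ℝ) (u : ι → κ → ℝ) :
    ∑ q, (∑ p, ∑ k, A p q k * u p k) ^ 2 ≤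
      (∑ p, ∑ q, ∑ k, A p q k ^ 2) * ∑ p, ∑ k, u p k ^ 2 :=
  calc ∑ q, (∑ p, ∑ k, A p q k * u p k) ^ 2
      ≤ ∑ q, (∑ p, ∑ k, A p q k ^ 2) * ∑ p, ∑ k, u p k ^ 2 :=
        sum_le_sum fun q _ => sq_sum_sum_mul_le (fun p k => A p q k) u
    _ = (∑ p, ∑ q, ∑ k, A p q k ^ 2) * ∑ p, ∑ k, u p k ^ 2 := by
        rw [← sum_mul, sum_comm]

theorem sq_sub_le_of_abs_sub_le {f : ℝ → ℝ} {K s t : ℝ} (h : |f s - f t| ≤ K * |s - t|) :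
    (f s - f t) ^ 2 ≤ K ^ 2 * (s - t) ^ 2 := by
  rw [← mul_pow]
  refine sq_le_sq.mpr (h.trans ?_)
  rw [abs_mul]
  gcongr
  exact le_abs_self K

theorem sum_sum_sq_sub_le {ι κ : Type*} [Fintype ι] [Fintype κ] {b : κ → ℝ → ℝ} {K : ℝ}
    (hlip : ∀ k s t, |b k s - b k t| ≤ K * |s - t|) (z z' : ι → ℝ) :
    ∑ p, ∑ k, (b k (z p) - b k (z' p)) ^ 2 ≤ K ^ 2 * Fintype.card κ * ∑ p, (z p - z' p) ^ 2 :=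
  calc ∑ p, ∑ k, (b k (z p) - b k (z' p)) ^ 2
      ≤ ∑ p, ∑ _k : κ, K ^ 2 * (z p - z' p) ^ 2 :=
        sum_le_sum fun p _ => sum_le_sum fun k _ => sq_sub_le_of_abs_sub_le (hlip k _ _)
    _ = K ^ 2 * Fintype.card κ * ∑ p, (z p - z' p) ^ 2 := by
        simp only [sum_const, card_univ, nsmul_eq_mul, mul_sum]
        exact sum_congr rfl fun p _ => by ring

theorem kanLayer_sub_apply {n m nd : ℕ} (b : Fin nd → ℝ → ℝ) (A : Fin n → Fin m → Fin nd → ℝ)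
    (z z' : Fin n → ℝ) (q : Fin m) :
    kanLayer b A z q - kanLayer b A z' q = ∑ p, ∑ k, A p q k * (b k (z p) - b k (z' p)) := by
  simp only [kanLayer, ← sum_sub_distrib, mul_sub]

/-- If every basis function is `K`-Lipschitz with `K > 0` and `‖A‖_F ≤ M`, then a KAN
layer is `M K √n_d`-Lipschitz in its input. -/
theorem kanLayer_input_lipschitz {n m nd : ℕ} (b : Fin nd → ℝ → ℝ) (K : ℝ) (hK : 0 < K)
    (hlip : ∀ (k : Fin nd) (s t : ℝ), |b k s - b k t| ≤ K * |s - t|)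
    (A : Fin n → Fin m → Fin nd → ℝ) (M : ℝ) (hM : frob3 A ≤ M)
    (z z' : Fin n → ℝ) :
    _root_.enorm (fun q => kanLayer b A z q - kanLayer b A z' q) ≤
      M * K * Real.sqrt (nd : ℝ) * _root_.enorm (fun p => z p - z' p) := by
  have hM0 : 0 ≤ M := (Real.sqrt_nonneg _).trans hM
  have hA : ∑ p, ∑ q, ∑ k, A p q k ^ 2 ≤ M ^ 2 := by
    rw [← sq_frob3]
    exact pow_le_pow_left₀ (Real.sqrt_nonneg _) hM 2
  refine enorm_le_of_sum_sq_le (mul_nonneg (by positivity) (Real.sqrt_nonneg _)) ?_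
  calc ∑ q, (kanLayer b A z q - kanLayer b A z' q) ^ 2
      = ∑ q, (∑ p, ∑ k, A p q k * (b k (z p) - b k (z' p))) ^ 2 := by
        simp only [kanLayer_sub_apply]
    _ ≤ (∑ p, ∑ q, ∑ k, A p q k ^ 2) * ∑ p, ∑ k, (b k (z p) - b k (z' p)) ^ 2 :=
        sum_sq_contract_le A _
    _ ≤ M ^ 2 * (K ^ 2 * nd * ∑ p, (z p - z' p) ^ 2) := by
        simpa only [Fintype.card_fin] using
          mul_le_mul hA (sum_sum_sq_sub_le hlip z z') (by positivity) (sq_nonneg M)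
    _ = (M * K * Real.sqrt nd * _root_.enorm (fun p => z p - z' p)) ^ 2 := by
        rw [mul_pow, mul_pow, mul_pow, Real.sq_sqrt (Nat.cast_nonneg nd), sq_enorm]
        ring
end
end

section
/- Suppose each basis function b_k : ℝ → ℝ (k = 1,…,n_d) satisfies |b_k(t)| ≤ B for all t ∈ ℝ and is Lipschitz with constant K > 0. Let A, A' ∈ ℝ^{n×m×n_d} be parameter tensors. Then for all z, z' ∈ ℝ^n, ‖Φ(z;A) − Φ(z';A')‖₂ ≤ B √(n · n_d) · ‖A − A'‖_F + ‖A'‖_F · K √n_d · ‖z − z'‖₂. -/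
noncomputable section
open Finset

/-- Euclidean norm of a finitely-indexed real vector. -/
def enorm2 {ι : Type*} [Fintype ι] (x : ι → ℝ) : ℝ :=
  Real.sqrt (∑ i, x i ^ 2)

/-! Splitting `Φ(z;A) − Φ(z';A') = Φ(z;A − A') + (Φ(z;A') − Φ(z';A'))`, the first term is
bounded through `|b_k| ≤ B` and the second through the Lipschitz bound on `b_k`; each is the
contraction of a tensor with an `n × n_d` array, which Cauchy–Schwarz bounds by the product of
their Frobenius norms. -/

section Euclidean

variable {ι κ : Type*} [Fintype ι] [Fintype κ]

lemma enorm2_eq_norm_toLp (x : ι → ℝ) : enorm2 x = ‖(WithLp.toLp 2 x : EuclideanSpace ℝ ι)‖ := by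
  simp [EuclideanSpace.norm_eq, enorm2, Real.norm_eq_abs, sq_abs]

lemma enorm2_add_le (f g : ι → ℝ) : enorm2 (fun i => f i + g i) ≤ enorm2 f + enorm2 g := by
  simp only [enorm2_eq_norm_toLp]
  exact norm_add_le _ _

lemma enorm2_one : enorm2 (fun _ : ι => (1 : ℝ)) = Real.sqrt (Fintype.card ι) := by
  simp [enorm2]

lemma enorm2_uncurry_le {K : ℝ} (hK : 0 ≤ K) (d : ι → κ → ℝ) (w : ι → ℝ)
    (h : ∀ i j, |d i j| ≤ K * |w i|) :
    enorm2 (Function.uncurry d) ≤ K * Real.sqrt (Fintype.card κ) * enorm2 w := by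
  have hsq : ∑ x : ι × κ, Function.uncurry d x ^ 2 ≤ (K ^ 2 * Fintype.card κ) * ∑ i, w i ^ 2 :=
    calc ∑ x : ι × κ, Function.uncurry d x ^ 2
        = ∑ i, ∑ j, d i j ^ 2 := Fintype.sum_prod_type _
      _ ≤ ∑ i, ∑ _j : κ, K ^ 2 * w i ^ 2 := by
          gcongr with i _ j
          simpa only [sq_abs, mul_pow] using pow_le_pow_left₀ (abs_nonneg _) (h i j) 2
      _ = (K ^ 2 * Fintype.card κ) * ∑ i, w i ^ 2 := by
          simp only [sum_const, card_univ, nsmul_eq_mul, mul_sum]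
          exact sum_congr rfl fun _ _ => by ring
  calc enorm2 (Function.uncurry d)
      ≤ Real.sqrt ((K ^ 2 * Fintype.card κ) * ∑ i, w i ^ 2) := Real.sqrt_le_sqrt hsq
    _ = K * Real.sqrt (Fintype.card κ) * enorm2 w := by
        rw [Real.sqrt_mul (by positivity), Real.sqrt_mul (by positivity), Real.sqrt_sq hK, enorm2]

end Euclidean

lemma enorm2_contract_le_frob3_mul {n m nd : ℕ} (C : Fin n → Fin m → Fin nd → ℝ)
    (d : Fin n → Fin nd → ℝ) :
    enorm2 (fun q => ∑ p, ∑ k, C p q k * d p k) ≤ frob3 C * enorm2 (Function.uncurry d) := by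
  rw [enorm2, enorm2, frob3, ← Real.sqrt_mul (by positivity), Fintype.sum_prod_type]
  apply Real.sqrt_le_sqrt
  calc ∑ q, (∑ p, ∑ k, C p q k * d p k) ^ 2
      ≤ ∑ q, (∑ p, ∑ k, C p q k ^ 2) * (∑ p, ∑ k, d p k ^ 2) := by
        gcongr with q
        simpa [Fintype.sum_prod_type] using
          sum_mul_sq_le_sq_mul_sq univ (fun x : Fin n × Fin nd => C x.1 q x.2)
            (fun x => d x.1 x.2)
    _ = (∑ p, ∑ q, ∑ k, C p q k ^ 2) * (∑ p, ∑ k, d p k ^ 2) := by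
        rw [← sum_mul, sum_comm]

lemma kanLayer_sub_kanLayer {n m nd : ℕ} (b : Fin nd → ℝ → ℝ)
    (A A' : Fin n → Fin m → Fin nd → ℝ) (z z' : Fin n → ℝ) :
    (fun q => kanLayer b A z q - kanLayer b A' z' q) =
      fun q => (∑ p, ∑ k, (A p q k - A' p q k) * b k (z p)) +
        ∑ p, ∑ k, A' p q k * (b k (z p) - b k (z' p)) := by
  funext q
  simp only [kanLayer, sub_mul, mul_sub, sum_sub_distrib]
  ring

/-- Combined perturbation bound for a KAN layer in both parameters and input:
`‖Φ(z;A) − Φ(z';A')‖₂ ≤ B √(n n_d) ‖A − A'‖_F + ‖A'‖_F K √n_d ‖z − z'‖₂`. -/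
theorem kanLayer_perturbation {n m nd : ℕ} (b : Fin nd → ℝ → ℝ) (B K : ℝ)
    (hB : 0 < B) (hK : 0 < K)
    (hbound : ∀ (k : Fin nd) (t : ℝ), |b k t| ≤ B)
    (hlip : ∀ (k : Fin nd) (s t : ℝ), |b k s - b k t| ≤ K * |s - t|)
    (A A' : Fin n → Fin m → Fin nd → ℝ) (z z' : Fin n → ℝ) :
    enorm2 (fun q => kanLayer b A z q - kanLayer b A' z' q) ≤
      B * Real.sqrt ((n : ℝ) * (nd : ℝ)) * frob3 (fun p q k => A p q k - A' p q k) +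
        frob3 A' * K * Real.sqrt (nd : ℝ) * enorm2 (fun p => z p - z' p) := by
  have hvalues : enorm2 (Function.uncurry fun p k => b k (z p)) ≤ B * Real.sqrt (n * nd) := by
    have := enorm2_uncurry_le hB.le (fun p k => b k (z p)) (fun _ => 1)
      (fun p k => by simpa using hbound k (z p))
    rwa [enorm2_one, Fintype.card_fin, Fintype.card_fin, mul_assoc, ← Real.sqrt_mul',
      mul_comm (nd : ℝ)] at this
    positivity
  have hincrements : enorm2 (Function.uncurry fun p k => b k (z p) - b k (z' p)) ≤
      K * Real.sqrt nd * enorm2 (fun p => z p - z' p) := by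
    simpa using enorm2_uncurry_le hK.le _ _ fun p k => hlip k (z p) (z' p)
  rw [kanLayer_sub_kanLayer]
  refine (enorm2_add_le _ _).trans (add_le_add ?_ ?_)
  · calc _ ≤ _ := enorm2_contract_le_frob3_mul _ _
      _ ≤ _ := mul_le_mul_of_nonneg_left hvalues (Real.sqrt_nonneg _)
      _ = _ := mul_comm _ _
  · calc _ ≤ _ := enorm2_contract_le_frob3_mul _ _
      _ ≤ _ := mul_le_mul_of_nonneg_left hincrements (Real.sqrt_nonneg _)
      _ = _ := by ring
end
end

section
/- Suppose each basis function b_k : ℝ → ℝ (k = 1,…,n_d) satisfies |b_k(t)| ≤ B for all t ∈ ℝ. Let A_pt, A_tg ∈ ℝ^{n×m×n_d}, set E = A_tg − A_pt, and fix ranks r1 ≤ n, r2 ≤ m, r3 ≤ n_d. Then there exist G ∈ ℝ^{r1×r2×r3} and matrices U^{(1)} ∈ ℝ^{n×r1}, U^{(2)} ∈ ℝ^{m×r2}, U^{(3)} ∈ ℝ^{n_d×r3} such that, with A_ft = A_pt + G ×₁ U^{(1)} ×₂ U^{(2)} ×₃ U^{(3)}, for every z ∈ ℝ^n: ‖Φ(z;A_ft)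 − Φ(z;A_tg)‖₂ ≤ B √(n · n_d) · ( Σ_{r=r1+1}^{n} σ_r(E^{(1)})² + Σ_{r=r2+1}^{m} σ_r(E^{(2)})² + Σ_{r=r3+1}^{n_d} σ_r(E^{(3)})² )^{1/2}. -/
/-!
Let `Pᵢ = UᵢUᵢᵀ` be the orthogonal projection onto the leading `rᵢ` left singular vectors of the
mode-`i` unfolding of `E = A_tg - A_pt`. With `G = E ×₁ U₁ᵀ ×₂ U₂ᵀ ×₃ U₃ᵀ` the Tucker update is
`E ×₁ P₁ ×₂ P₂ ×₃ P₃`. Since `X - PY = (X - PX) + P(X - Y)` is an orthogonal splitting and `P` is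
a contraction, `‖E - E ×₁ P₁ ×₂ P₂ ×₃ P₃‖_F² ≤ ∑ᵢ ‖E - E ×ᵢ Pᵢ‖_F²`, and in the eigenbasis of
`E⁽ⁱ⁾E⁽ⁱ⁾ᵀ` the `i`-th term is the tail `∑_{r > rᵢ} σ_r(E⁽ⁱ⁾)²`. Finally `Φ(z; ·)` is linear and,
by Cauchy–Schwarz, `‖Φ(z; A)‖₂ ≤ B √(n n_d) ‖A‖_F`.
-/

noncomputable section
open Finset Matrix

/-- Euclidean norm of a finitely-indexed real vector. -/
def euclNorm {ι : Type*} [Fintype ι] (x : ι → ℝ) : ℝ :=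
  Real.sqrt (∑ i, x i ^ 2)

def frobSq {α β : Type*} [Fintype α] [Fintype β] (M : Matrix α β ℝ) : ℝ :=
  ∑ i, ∑ j, M i j ^ 2

lemma frobSq_nonneg {α β : Type*} [Fintype α] [Fintype β] (M : Matrix α β ℝ) :
    0 ≤ frobSq M := by
  unfold frobSq; positivity

lemma frobSq_eq_trace {α β : Type*} [Fintype α] [Fintype β] (M : Matrix α β ℝ) :
    frobSq M = trace (Mᵀ * M) := by
  simp only [frobSq, trace, diag_apply, mul_apply, transpose_apply, sq]
  exact Finset.sum_comm

lemma frobSq_sub_comm {α β : Type*} [Fintype α] [Fintype β] (X Y : Matrix α β ℝ) :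
    frobSq (X - Y) = frobSq (Y - X) := by
  rw [← neg_sub Y X]
  simp only [frobSq, Matrix.neg_apply, neg_sq]

section Projection

variable {ι κ ι' : Type*} [Fintype ι] [Fintype κ] [DecidableEq κ] {U : Matrix ι κ ℝ}

lemma transpose_mul_mul_cancel (hU : Uᵀ * U = 1) (Z : Matrix κ ι' ℝ) :
    Uᵀ * (U * Z) = Z := by
  rw [← Matrix.mul_assoc, hU, Matrix.one_mul]

variable [Fintype ι']

lemma frobSq_proj_mul (hU : Uᵀ * U = 1) (Y : Matrix ι ι' ℝ) :
    frobSq (U * Uᵀ * Y) = frobSq (Uᵀ * Y) := by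
  simp only [frobSq_eq_trace, transpose_mul, transpose_transpose, Matrix.mul_assoc,
    transpose_mul_mul_cancel hU]

lemma frobSq_sub_proj_add_proj (hU : Uᵀ * U = 1) (X Y : Matrix ι ι' ℝ) :
    frobSq (X - U * Uᵀ * X + U * Uᵀ * Y) = frobSq (X - U * Uᵀ * X) + frobSq (U * Uᵀ * Y) := by
  have hcross : (X - U * Uᵀ * X)ᵀ * (U * Uᵀ * Y) = 0 := by
    simp only [transpose_sub, Matrix.sub_mul, transpose_mul, transpose_transpose,
      Matrix.mul_assoc, transpose_mul_mul_cancel hU, sub_self]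
  have hcross' : (U * Uᵀ * Y)ᵀ * (X - U * Uᵀ * X) = 0 := by
    rw [← transpose_transpose (X - U * Uᵀ * X), ← transpose_mul, hcross, transpose_zero]
  rw [frobSq_eq_trace, frobSq_eq_trace (X - _), frobSq_eq_trace (U * Uᵀ * Y), transpose_add,
    Matrix.add_mul, Matrix.mul_add, Matrix.mul_add, hcross, hcross', add_zero, zero_add,
    trace_add]

lemma frobSq_proj_mul_le (hU : Uᵀ * U = 1) (Y : Matrix ι ι' ℝ) :
    frobSq (U * Uᵀ * Y) ≤ frobSq Y := by
  have h := frobSq_sub_proj_add_proj hU Y Y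
  rw [sub_add_cancel] at h
  linarith [frobSq_nonneg (Y - U * Uᵀ * Y)]

lemma frobSq_sub_proj_self (hU : Uᵀ * U = 1) (X : Matrix ι ι' ℝ) :
    frobSq (X - U * Uᵀ * X) = frobSq X - frobSq (Uᵀ * X) := by
  have h := frobSq_sub_proj_add_proj hU X X
  rw [sub_add_cancel, frobSq_proj_mul hU] at h
  linarith

lemma frobSq_sub_proj_mul_le (hU : Uᵀ * U = 1) (X Y : Matrix ι ι' ℝ) :
    frobSq (X - U * Uᵀ * Y) ≤ frobSq (X - U * Uᵀ * X) + frobSq (X - Y) := by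
  have hsplit : X - U * Uᵀ * Y = X - U * Uᵀ * X + U * Uᵀ * (X - Y) := by
    rw [Matrix.mul_sub]; abel
  rw [hsplit, frobSq_sub_proj_add_proj hU]
  gcongr
  exact frobSq_proj_mul_le hU (X - Y)

end Projection

namespace Matrix.IsHermitian

variable {n κ : Type*} [Fintype n] [DecidableEq n] {A : Matrix n n ℝ} (hA : A.IsHermitian)

lemma transpose_mul_eigenvectorUnitary :
    (hA.eigenvectorUnitary : Matrix n n ℝ)ᵀ * hA.eigenvectorUnitary = 1 := by
  rw [← conjTranspose_eq_transpose_of_trivial, ← star_eq_conjTranspose, Unitary.coe_star_mul_self]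

lemma transpose_eigenvectorUnitary_mul_mul :
    (hA.eigenvectorUnitary : Matrix n n ℝ)ᵀ * A * hA.eigenvectorUnitary =
      diagonal hA.eigenvalues := by
  have h := hA.conjStarAlgAut_star_eigenvectorUnitary
  rw [Unitary.conjStarAlgAut_star_apply, star_eq_conjTranspose,
    conjTranspose_eq_transpose_of_trivial, RCLike.ofReal_real_eq_id] at h
  exact h

lemma transpose_mul_submatrix_eigenvectorUnitary [DecidableEq κ] {e : κ → n}
    (he : Function.Injective e) :
    ((hA.eigenvectorUnitary : Matrix n n ℝ).submatrix id e)ᵀ *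
      (hA.eigenvectorUnitary : Matrix n n ℝ).submatrix id e = 1 := by
  rw [transpose_submatrix, ← submatrix_mul _ _ _ _ _ Function.bijective_id,
    hA.transpose_mul_eigenvectorUnitary, submatrix_one _ he]

lemma trace_transpose_mul_mul_submatrix_eigenvectorUnitary [Fintype κ] (e : κ → n) :
    trace (((hA.eigenvectorUnitary : Matrix n n ℝ).submatrix id e)ᵀ * A *
      (hA.eigenvectorUnitary : Matrix n n ℝ).submatrix id e) = ∑ a, hA.eigenvalues (e a) := by
  have h : ((hA.eigenvectorUnitary : Matrix n n ℝ).submatrix id e)ᵀ * A *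
      (hA.eigenvectorUnitary : Matrix n n ℝ).submatrix id e =
      ((hA.eigenvectorUnitary : Matrix n n ℝ)ᵀ * A * hA.eigenvectorUnitary).submatrix e e := by
    ext a b; simp [mul_apply]
  rw [h, hA.transpose_eigenvectorUnitary_mul_mul]
  simp [trace]

end Matrix.IsHermitian

lemma Fin.sum_castLE_add_sum_filter_le {M : Type*} [AddCommMonoid M] {r N : ℕ} (hr : r ≤ N)
    (f : Fin N → M) :
    ∑ a : Fin r, f (Fin.castLE hr a) + ∑ q ∈ univ.filter (fun q : Fin N => r ≤ (q : ℕ)), f q =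
      ∑ q, f q := by
  have hmap : univ.map (Fin.castLEEmb hr) = univ.filter (fun q : Fin N => (q : ℕ) < r) := by
    ext q
    simp only [mem_map, mem_univ, true_and, mem_filter, Fin.coe_castLEEmb]
    exact ⟨fun ⟨a, ha⟩ => ha ▸ a.isLt, fun h => ⟨⟨q, h⟩, rfl⟩⟩
  rw [← sum_filter_add_sum_filter_not univ (fun q : Fin N => (q : ℕ) < r), ← hmap, sum_map]
  simp only [Fin.coe_castLEEmb, not_lt]

def svalTail {N : ℕ} {ι : Type*} [Fintype ι] (M : Matrix (Fin N) ι ℝ) (r : ℕ) : ℝ :=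
  ∑ q ∈ univ.filter (fun q : Fin N => r ≤ (q : ℕ)), sval M q ^ 2

section SingularValues

variable {N : ℕ} {ι : Type*} [Fintype ι] (M : Matrix (Fin N) ι ℝ)

lemma sq_sval (q : Fin N) :
    sval M q ^ 2 = (isHermitian_mul_conjTranspose_self M).eigenvalues
      (Tuple.sort (isHermitian_mul_conjTranspose_self M).eigenvalues q.rev) :=
  Real.sq_sqrt (eigenvalues_self_mul_conjTranspose_nonneg M _)

lemma sum_sq_sval : ∑ q, sval M q ^ 2 = frobSq M := by
  set hH := isHermitian_mul_conjTranspose_self M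
  simp only [sq_sval]
  refine (Equiv.sum_comp (Fin.revPerm.trans (Tuple.sort hH.eigenvalues)) hH.eigenvalues).trans ?_
  rw [frobSq_eq_trace, trace_mul_comm, ← conjTranspose_eq_transpose_of_trivial,
    hH.trace_eq_sum_eigenvalues]
  simp

lemma exists_frobSq_sub_proj_eq_svalTail {r : ℕ} (hr : r ≤ N) :
    ∃ U : Matrix (Fin N) (Fin r) ℝ, Uᵀ * U = 1 ∧ frobSq (M - U * Uᵀ * M) = svalTail M r := by
  set hH := isHermitian_mul_conjTranspose_self M
  -- `Tuple.sort` is ascending, so `e` indexes the `r` largest eigenvalues of `M * Mᵀ`.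
  set e : Fin r → Fin N := fun a => Tuple.sort hH.eigenvalues (Fin.castLE hr a).rev
  have he : Function.Injective e :=
    (Tuple.sort _).injective.comp (Fin.rev_injective.comp (Fin.castLE_injective hr))
  set U := (hH.eigenvectorUnitary : Matrix (Fin N) (Fin N) ℝ).submatrix id e
  have hU : Uᵀ * U = 1 := hH.transpose_mul_submatrix_eigenvectorUnitary he
  refine ⟨U, hU, ?_⟩
  have hhead : frobSq (Uᵀ * M) = ∑ a : Fin r, sval M (Fin.castLE hr a) ^ 2 := by
    rw [frobSq_eq_trace, transpose_mul, transpose_transpose, trace_mul_comm, Matrix.mul_assoc,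
      ← Matrix.mul_assoc M, ← Matrix.mul_assoc, ← conjTranspose_eq_transpose_of_trivial M,
      hH.trace_transpose_mul_mul_submatrix_eigenvectorUnitary]
    simp only [sq_sval, e]
  rw [frobSq_sub_proj_self hU, hhead, ← sum_sq_sval, ← Fin.sum_castLE_add_sum_filter_le hr,
    svalTail, add_sub_cancel_left]

end SingularValues

section ModeProduct

variable {n1 n2 n3 : ℕ}

def modeProd1 {r1 : ℕ} (X : Fin r1 → Fin n2 → Fin n3 → ℝ) (P : Matrix (Fin n1) (Fin r1) ℝ) :
    Fin n1 → Fin n2 → Fin n3 → ℝ :=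
  fun p q k => ∑ a, P p a * X a q k

def modeProd2 {r2 : ℕ} (X : Fin n1 → Fin r2 → Fin n3 → ℝ) (P : Matrix (Fin n2) (Fin r2) ℝ) :
    Fin n1 → Fin n2 → Fin n3 → ℝ :=
  fun p q k => ∑ b, P q b * X p b k

def modeProd3 {r3 : ℕ} (X : Fin n1 → Fin n2 → Fin r3 → ℝ) (P : Matrix (Fin n3) (Fin r3) ℝ) :
    Fin n1 → Fin n2 → Fin n3 → ℝ :=
  fun p q k => ∑ c, P k c * X p q c

notation:70 X:70 " ×₁ " P:71 => modeProd1 X P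
notation:70 X:70 " ×₂ " P:71 => modeProd2 X P
notation:70 X:70 " ×₃ " P:71 => modeProd3 X P

lemma tucker_eq_modeProd {r1 r2 r3 : ℕ} (G : Fin r1 → Fin r2 → Fin r3 → ℝ)
    (U1 : Matrix (Fin n1) (Fin r1) ℝ) (U2 : Matrix (Fin n2) (Fin r2) ℝ)
    (U3 : Matrix (Fin n3) (Fin r3) ℝ) :
    tucker G U1 U2 U3 = G ×₃ U3 ×₂ U2 ×₁ U1 := by
  funext p q k
  simp only [tucker, modeProd1, modeProd2, modeProd3, mul_sum]
  exact sum_congr rfl fun a _ => sum_congr rfl fun b _ => sum_congr rfl fun c _ => by ring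

lemma modeProd1_modeProd1 {r s : ℕ} (X : Fin r → Fin n2 → Fin n3 → ℝ)
    (A : Matrix (Fin s) (Fin r) ℝ) (B : Matrix (Fin n1) (Fin s) ℝ) :
    X ×₁ A ×₁ B = X ×₁ (B * A) := by
  funext p q k
  simp only [modeProd1, mul_apply, mul_sum, sum_mul]
  rw [sum_comm]
  exact sum_congr rfl fun _ _ => sum_congr rfl fun _ _ => by ring

lemma modeProd2_modeProd2 {r s : ℕ} (X : Fin n1 → Fin r → Fin n3 → ℝ)
    (A : Matrix (Fin s) (Fin r) ℝ) (B : Matrix (Fin n2) (Fin s) ℝ) :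
    X ×₂ A ×₂ B = X ×₂ (B * A) := by
  funext p q k
  simp only [modeProd2, mul_apply, mul_sum, sum_mul]
  rw [sum_comm]
  exact sum_congr rfl fun _ _ => sum_congr rfl fun _ _ => by ring

lemma modeProd3_modeProd3 {r s : ℕ} (X : Fin n1 → Fin n2 → Fin r → ℝ)
    (A : Matrix (Fin s) (Fin r) ℝ) (B : Matrix (Fin n3) (Fin s) ℝ) :
    X ×₃ A ×₃ B = X ×₃ (B * A) := by
  funext p q k
  simp only [modeProd3, mul_apply, mul_sum, sum_mul]
  rw [sum_comm]
  exact sum_congr rfl fun _ _ => sum_congr rfl fun _ _ => by ring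

lemma modeProd1_modeProd2 {r1 r2 : ℕ} (X : Fin r1 → Fin r2 → Fin n3 → ℝ)
    (A : Matrix (Fin n1) (Fin r1) ℝ) (B : Matrix (Fin n2) (Fin r2) ℝ) :
    X ×₁ A ×₂ B = X ×₂ B ×₁ A := by
  funext p q k
  simp only [modeProd1, modeProd2, mul_sum]
  rw [sum_comm]
  exact sum_congr rfl fun _ _ => sum_congr rfl fun _ _ => by ring

lemma modeProd1_modeProd3 {r1 r3 : ℕ} (X : Fin r1 → Fin n2 → Fin r3 → ℝ)
    (A : Matrix (Fin n1) (Fin r1) ℝ) (B : Matrix (Fin n3) (Fin r3) ℝ) :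
    X ×₁ A ×₃ B = X ×₃ B ×₁ A := by
  funext p q k
  simp only [modeProd1, modeProd3, mul_sum]
  rw [sum_comm]
  exact sum_congr rfl fun _ _ => sum_congr rfl fun _ _ => by ring

lemma modeProd2_modeProd3 {r2 r3 : ℕ} (X : Fin n1 → Fin r2 → Fin r3 → ℝ)
    (A : Matrix (Fin n2) (Fin r2) ℝ) (B : Matrix (Fin n3) (Fin r3) ℝ) :
    X ×₂ A ×₃ B = X ×₃ B ×₂ A := by
  funext p q k
  simp only [modeProd2, modeProd3, mul_sum]
  rw [sum_comm]
  exact sum_congr rfl fun _ _ => sum_congr rfl fun _ _ => by ring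

lemma unfold1_modeProd1 {r : ℕ} (X : Fin r → Fin n2 → Fin n3 → ℝ)
    (P : Matrix (Fin n1) (Fin r) ℝ) : unfold1 (X ×₁ P) = P * unfold1 X :=
  rfl

lemma unfold2_modeProd2 {r : ℕ} (X : Fin n1 → Fin r → Fin n3 → ℝ)
    (P : Matrix (Fin n2) (Fin r) ℝ) : unfold2 (X ×₂ P) = P * unfold2 X :=
  rfl

lemma unfold3_modeProd3 {r : ℕ} (X : Fin n1 → Fin n2 → Fin r → ℝ)
    (P : Matrix (Fin n3) (Fin r) ℝ) : unfold3 (X ×₃ P) = P * unfold3 X :=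
  rfl

end ModeProduct

section Unfolding

variable {n1 n2 n3 : ℕ} (X Y : Fin n1 → Fin n2 → Fin n3 → ℝ)

lemma unfold1_sub : unfold1 (X - Y) = unfold1 X - unfold1 Y := rfl

lemma unfold2_sub : unfold2 (X - Y) = unfold2 X - unfold2 Y := rfl

lemma unfold3_sub : unfold3 (X - Y) = unfold3 X - unfold3 Y := rfl

lemma frobSq_unfold2 : frobSq (unfold2 X) = frobSq (unfold1 X) := by
  simp only [frobSq, unfold1, unfold2, of_apply, Fintype.sum_prod_type]
  exact sum_comm

lemma frobSq_unfold3 : frobSq (unfold3 X) = frobSq (unfold1 X) := by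
  simp only [frobSq, unfold1, unfold3, of_apply, Fintype.sum_prod_type]
  rw [sum_comm]
  exact sum_congr rfl fun _ _ => sum_comm

end Unfolding

section Truncation

variable {n1 n2 n3 r1 r2 r3 : ℕ}

lemma frobSq_sub_modeProd_proj_le (E : Fin n1 → Fin n2 → Fin n3 → ℝ)
    {U1 : Matrix (Fin n1) (Fin r1) ℝ} {U2 : Matrix (Fin n2) (Fin r2) ℝ}
    {U3 : Matrix (Fin n3) (Fin r3) ℝ}
    (hU1 : U1ᵀ * U1 = 1) (hU2 : U2ᵀ * U2 = 1) :
    frobSq (unfold1 (E - E ×₃ (U3 * U3ᵀ) ×₂ (U2 * U2ᵀ) ×₁ (U1 * U1ᵀ))) ≤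
      frobSq (unfold1 E - U1 * U1ᵀ * unfold1 E) + frobSq (unfold2 E - U2 * U2ᵀ * unfold2 E) +
        frobSq (unfold3 E - U3 * U3ᵀ * unfold3 E) := by
  calc frobSq (unfold1 (E - E ×₃ (U3 * U3ᵀ) ×₂ (U2 * U2ᵀ) ×₁ (U1 * U1ᵀ)))
      ≤ frobSq (unfold1 E - U1 * U1ᵀ * unfold1 E) +
          frobSq (unfold2 (E - E ×₃ (U3 * U3ᵀ) ×₂ (U2 * U2ᵀ))) := by
        rw [frobSq_unfold2, unfold1_sub, unfold1_modeProd1, unfold1_sub]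
        exact frobSq_sub_proj_mul_le hU1 _ _
    _ ≤ frobSq (unfold1 E - U1 * U1ᵀ * unfold1 E) +
          (frobSq (unfold2 E - U2 * U2ᵀ * unfold2 E) +
            frobSq (unfold3 (E - E ×₃ (U3 * U3ᵀ)))) := by
        rw [frobSq_unfold3, ← frobSq_unfold2, unfold2_sub, unfold2_modeProd2, unfold2_sub]
        gcongr
        exact frobSq_sub_proj_mul_le hU2 _ _
    _ = _ := by
        rw [unfold3_sub, unfold3_modeProd3, add_assoc]

lemma exists_tucker_frobSq_sub_le (E : Fin n1 → Fin n2 → Fin n3 → ℝ)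
    (hr1 : r1 ≤ n1) (hr2 : r2 ≤ n2) (hr3 : r3 ≤ n3) :
    ∃ (G : Fin r1 → Fin r2 → Fin r3 → ℝ) (U1 : Matrix (Fin n1) (Fin r1) ℝ)
      (U2 : Matrix (Fin n2) (Fin r2) ℝ) (U3 : Matrix (Fin n3) (Fin r3) ℝ),
      frobSq (unfold1 (E - tucker G U1 U2 U3)) ≤
        svalTail (unfold1 E) r1 + svalTail (unfold2 E) r2 + svalTail (unfold3 E) r3 := by
  obtain ⟨U1, hU1, h1⟩ := exists_frobSq_sub_proj_eq_svalTail (unfold1 E) hr1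
  obtain ⟨U2, hU2, h2⟩ := exists_frobSq_sub_proj_eq_svalTail (unfold2 E) hr2
  obtain ⟨U3, hU3, h3⟩ := exists_frobSq_sub_proj_eq_svalTail (unfold3 E) hr3
  refine ⟨E ×₃ U3ᵀ ×₂ U2ᵀ ×₁ U1ᵀ, U1, U2, U3, ?_⟩
  have hT : tucker (E ×₃ U3ᵀ ×₂ U2ᵀ ×₁ U1ᵀ) U1 U2 U3 =
      E ×₃ (U3 * U3ᵀ) ×₂ (U2 * U2ᵀ) ×₁ (U1 * U1ᵀ) := by
    simp only [tucker_eq_modeProd, modeProd1_modeProd3, modeProd2_modeProd3, modeProd1_modeProd2,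
      modeProd1_modeProd1, modeProd2_modeProd2, modeProd3_modeProd3]
  rw [hT, ← h1, ← h2, ← h3]
  exact frobSq_sub_modeProd_proj_le E hU1 hU2

end Truncation

lemma euclNorm_mulVec_le {ι κ : Type*} [Fintype ι] [Fintype κ] {B : ℝ} (hB : 0 ≤ B)
    (M : Matrix ι κ ℝ) {v : κ → ℝ} (hv : ∀ j, |v j| ≤ B) :
    euclNorm (M *ᵥ v) ≤ B * √(Fintype.card κ) * √(frobSq M) := by
  have hrow : ∀ i, (M *ᵥ v) i ^ 2 ≤ B ^ 2 * Fintype.card κ * ∑ j, M i j ^ 2 := fun i =>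
    calc (∑ j, M i j * v j) ^ 2 ≤ (∑ j, M i j ^ 2) * ∑ j, v j ^ 2 :=
          sum_mul_sq_le_sq_mul_sq _ _ _
      _ ≤ (∑ j, M i j ^ 2) * ∑ _j : κ, B ^ 2 := by
          refine mul_le_mul_of_nonneg_left (sum_le_sum fun j _ => ?_) (by positivity)
          exact sq_le_sq' (abs_le.mp (hv j)).1 (abs_le.mp (hv j)).2
      _ = B ^ 2 * Fintype.card κ * ∑ j, M i j ^ 2 := by
          rw [sum_const, card_univ, nsmul_eq_mul]; ring
  calc euclNorm (M *ᵥ v) ≤ √(∑ i, B ^ 2 * Fintype.card κ * ∑ j, M i j ^ 2) :=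
        Real.sqrt_le_sqrt (sum_le_sum fun i _ => hrow i)
    _ = B * √(Fintype.card κ) * √(frobSq M) := by
        rw [← mul_sum, Real.sqrt_mul (by positivity), Real.sqrt_mul (sq_nonneg B),
          Real.sqrt_sq hB]
        rfl

lemma kanLayer_sub_eq_mulVec {n m nd : ℕ} (b : Fin nd → ℝ → ℝ)
    (A A' : Fin n → Fin m → Fin nd → ℝ) (z : Fin n → ℝ) :
    (fun q => kanLayer b A z q - kanLayer b A' z q) =
      unfold2 (A - A') *ᵥ fun pk => b pk.2 (z pk.1) := by
  funext q
  simp only [kanLayer, mulVec, dotProduct, unfold2, of_apply, Fintype.sum_prod_type,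
    Pi.sub_apply, sub_mul, sum_sub_distrib]

/-- **One-layer LoTRA approximation.**  With basis functions bounded by `B > 0`,
error tensor `E = A_tg − A_pt` and given Tucker ranks, there exists a LoTRA update
`A_ft = A_pt + G ×₁ U1 ×₂ U2 ×₃ U3` with, for all `z`,
`‖Φ(z;A_ft) − Φ(z;A_tg)‖₂ ≤ B √(n n_d) (tail sums of squared singular values)^{1/2}`.
(Singular-value indices are 0-based.) -/
theorem lotra_one_layer {n m nd : ℕ} (b : Fin nd → ℝ → ℝ) (B : ℝ) (hB : 0 < B)
    (hbound : ∀ (k : Fin nd) (t : ℝ), |b k t| ≤ B)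
    (Apt Atg : Fin n → Fin m → Fin nd → ℝ)
    (r1 r2 r3 : ℕ) (hr1 : r1 ≤ n) (hr2 : r2 ≤ m) (hr3 : r3 ≤ nd) :
    ∃ (G : Fin r1 → Fin r2 → Fin r3 → ℝ)
      (U1 : Matrix (Fin n) (Fin r1) ℝ) (U2 : Matrix (Fin m) (Fin r2) ℝ)
      (U3 : Matrix (Fin nd) (Fin r3) ℝ),
      ∀ z : Fin n → ℝ,
        euclNorm (fun q =>
            kanLayer b (fun p q k => Apt p q k + tucker G U1 U2 U3 p q k) z q -
            kanLayer b Atg z q) ≤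
        B * Real.sqrt ((n : ℝ) * (nd : ℝ)) *
          Real.sqrt
            ((∑ r ∈ Finset.univ.filter (fun r : Fin n => r1 ≤ (r : ℕ)),
                sval (unfold1 (fun p q k => Atg p q k - Apt p q k)) r ^ 2) +
             (∑ r ∈ Finset.univ.filter (fun r : Fin m => r2 ≤ (r : ℕ)),
                sval (unfold2 (fun p q k => Atg p q k - Apt p q k)) r ^ 2) +
             (∑ r ∈ Finset.univ.filter (fun r : Fin nd => r3 ≤ (r : ℕ)),
                sval (unfold3 (fun p q k => Atg p q k - Apt p q k)) r ^ 2)) := by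
  obtain ⟨G, U1, U2, U3, hE⟩ := exists_tucker_frobSq_sub_le (Atg - Apt) hr1 hr2 hr3
  refine ⟨G, U1, U2, U3, fun z => ?_⟩
  have hA : (fun p q k => Apt p q k + tucker G U1 U2 U3 p q k) - Atg =
      tucker G U1 U2 U3 - (Atg - Apt) := by
    funext p q k
    simp only [Pi.sub_apply]
    ring
  rw [kanLayer_sub_eq_mulVec, hA]
  refine (euclNorm_mulVec_le hB.le _ fun pk : Fin n × Fin nd => hbound pk.2 (z pk.1)).trans ?_
  rw [frobSq_unfold2, unfold1_sub, frobSq_sub_comm, ← unfold1_sub, Fintype.card_prod,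
    Fintype.card_fin, Fintype.card_fin, Nat.cast_mul]
  gcongr
  exact hE
end
end
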